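/- For a monotone testing policy D on [0,1]^K with null p-values Uniform(0,1), independent p-values, and extreme alternatives available, the probability of any false rejection when the true nulls are exactly the set I (with the non-null p-values driven to 0 along the extreme alternative sequence) converges to ∫_{[0,1]^{|I|}} max_{k ∈ I} D_k(p_I^0) dp_I, provided D is coordinatewise right-continuous at 0. In particular the supremum over all alternative parameters of the FWER when the null set is I equals this integral. -/

import Mathlib

/-!
The rejection set `U = {p | ∃ k ∈ I, D p k = 1}` is a lower set. Let `E ε` be the set of `p` that
still lie in `U` after every non-null coordinate is replaced by `ε`; its probability only involves
the null coordinates, hence equals its uniform measure. Non-null p-values are nonnegative, so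
`U ⊆ E 0` almost surely and the uniform measure of `E 0` bounds the FWER. Conversely
`E ε ⊆ U` on the event that all non-null p-values are below `ε`, so the FWER is at least the
uniform measure of `E ε` minus `∑ P(p_k ≥ ε)`, which tends to zero along the extreme
alternatives. Coordinatewise right-continuity at `0` makes `E ε` increase to `E 0` as `ε ↓ 0`,
and Dirac masses at `0` on the non-null coordinates attain the bound.
-/

open MeasureTheory

open Filter Function Set Topology

section Order

variable {ι : Type*} [DecidableEq ι] {U : Set (ι → ℝ)}

theorem IsLowerSet.exists_pos_piecewise_mem (hU : IsLowerSet U)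
    (hrc : ∀ p i, update p i 0 ∈ U → ∃ ε > 0, update p i ε ∈ U) (S : Finset ι) :
    ∀ q, S.piecewise (fun _ ↦ 0) q ∈ U → ∃ ε > 0, S.piecewise (fun _ ↦ ε) q ∈ U := by
  induction S using Finset.induction_on with
  | empty => exact fun q hq ↦ ⟨1, one_pos, by simpa using hq⟩
  | insert j S hj ih =>
    intro q hq
    rw [Finset.piecewise_insert] at hq
    obtain ⟨ε, hε, hεU⟩ := hrc _ j hq
    rw [Finset.update_piecewise_of_notMem (hi := hj)] at hεU
    obtain ⟨δ, hδ, hδU⟩ := ih _ hεU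
    refine ⟨min ε δ, lt_min hε hδ, hU ?_ hδU⟩
    intro i
    rcases eq_or_ne i j with rfl | hij
    · simp [hj]
    · by_cases hi : i ∈ S <;> simp [hi, hij]

theorem IsLowerSet.piecewise_preimage_antitone (hU : IsLowerSet U) (I : Finset ι) :
    Antitone fun ε : ℝ ↦ (I.piecewise · fun _ ↦ ε) ⁻¹' U :=
  fun _ _ hεδ _ hp ↦ hU (I.piecewise_le_piecewise le_rfl fun _ ↦ hεδ) hp

theorem IsLowerSet.iUnion_piecewise_preimage_eq [Fintype ι] (hU : IsLowerSet U)
    (hrc : ∀ p i, update p i 0 ∈ U → ∃ ε > 0, update p i ε ∈ U) (I : Finset ι) :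
    ⋃ n : ℕ, (I.piecewise · fun _ ↦ 1 / (n + 1 : ℝ)) ⁻¹' U = (I.piecewise · fun _ ↦ 0) ⁻¹' U := by
  refine subset_antisymm (iUnion_subset fun n ↦ hU.piecewise_preimage_antitone I ?_) fun p hp ↦ ?_
  · positivity
  rw [mem_preimage, ← Finset.piecewise_compl] at hp
  obtain ⟨ε, hε, hεU⟩ := hU.exists_pos_piecewise_mem hrc Iᶜ p hp
  obtain ⟨n, hn⟩ := exists_nat_one_div_lt hε
  rw [Finset.piecewise_compl] at hεU
  exact mem_iUnion.2 ⟨n, hU.piecewise_preimage_antitone I hn.le hεU⟩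

end Order

theorem tendsto_of_le_of_tendsto_lower_bounds {α ι κ : Type*} [LinearOrder α] [TopologicalSpace α]
    [OrderTopology α] {l : Filter ι} {l' : Filter κ} [l'.NeBot] {a : ι → α} {b : κ → α} {T : α}
    (L : κ → ι → α) (hb : Tendsto b l' (𝓝 T)) (hL : ∀ n, Tendsto (L n) l (𝓝 (b n)))
    (hlow : ∀ n j, L n j ≤ a j) (hup : ∀ j, a j ≤ T) : Tendsto a l (𝓝 T) := by
  refine tendsto_order.2 ⟨fun u hu ↦ ?_, fun u hu ↦ .of_forall fun j ↦ (hup j).trans_lt hu⟩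
  obtain ⟨n, hn⟩ := (hb.eventually (eventually_gt_nhds hu)).exists
  exact ((hL n).eventually (eventually_gt_nhds hn)).mono fun j hj ↦ hj.trans_le (hlow n j)

section Measure

variable {ι : Type*} [Fintype ι] [DecidableEq ι]

theorem measure_piecewise_preimage_congr {X : Type*} [MeasurableSpace X]
    {κ κ' : ι → Measure X} [∀ i, IsProbabilityMeasure (κ i)] [∀ i, IsProbabilityMeasure (κ' i)]
    {I : Finset ι} (h : ∀ i ∈ I, κ i = κ' i) (c : X) {B : Set (ι → X)} (hB : MeasurableSet B) :
    Measure.pi κ ((I.piecewise · fun _ ↦ c) ⁻¹' B)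
      = Measure.pi κ' ((I.piecewise · fun _ ↦ c) ⁻¹' B) := by
  let f : ι → X → X := fun i x ↦ if i ∈ I then x else c
  have hf : ∀ i, Measurable (f i) := fun i ↦ by
    by_cases hi : i ∈ I
    · simpa [f, hi] using measurable_id'
    · simp [f, hi]
  have key : ∀ (μ : ι → Measure X) [∀ i, IsProbabilityMeasure (μ i)],
      Measure.pi μ ((I.piecewise · fun _ ↦ c) ⁻¹' B) = Measure.pi (fun i ↦ (μ i).map (f i)) B := by
    intro μ _
    have := fun i ↦ Measure.isProbabilityMeasure_map (μ := μ i) (hf i).aemeasurable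
    rw [← Measure.pi_map_pi fun i ↦ (hf i).aemeasurable]
    exact (Measure.map_apply (measurable_pi_lambda _ fun i ↦ (hf i).comp (measurable_pi_apply i))
      hB).symm
  rw [key κ, key κ']
  refine congrArg (Measure.pi · B) (funext fun i ↦ ?_)
  by_cases hi : i ∈ I
  · simp [f, hi, h i hi]
  · simp [f, hi, Measure.map_const]

theorem measure_pi_le_measure_piecewise_preimage_zero {κ m : ι → Measure ℝ}
    [∀ i, IsProbabilityMeasure (κ i)] [∀ i, IsProbabilityMeasure (m i)]
    (hκ : ∀ i, ∀ᵐ x ∂κ i, 0 ≤ x) {U : Set (ι → ℝ)} (hU : IsLowerSet U) (hUm : MeasurableSet U)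
    {I : Finset ι} (hI : ∀ i ∈ I, κ i = m i) :
    Measure.pi κ U ≤ Measure.pi m ((I.piecewise · fun _ ↦ 0) ⁻¹' U) := by
  have hnn : ∀ᵐ p ∂Measure.pi κ, ∀ i, 0 ≤ p i :=
    ae_all_iff.2 fun i ↦ Measure.tendsto_eval_ae_ae.eventually (hκ i)
  refine (measure_mono_ae ?_).trans_eq (measure_piecewise_preimage_congr hI 0 hUm)
  filter_upwards [hnn] with p hp hpU
  exact hU (I.piecewise_le_of_le_of_le le_rfl hp) hpU

theorem measure_piecewise_preimage_le {κ : ι → Measure ℝ} [∀ i, IsProbabilityMeasure (κ i)]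
    {U : Set (ι → ℝ)} (hU : IsLowerSet U) (I : Finset ι) (ε : ℝ) :
    Measure.pi κ ((I.piecewise · fun _ ↦ ε) ⁻¹' U)
      ≤ Measure.pi κ U + ∑ i ∈ Iᶜ, κ i (Ici ε) := by
  have hsub : (I.piecewise · fun _ ↦ ε) ⁻¹' U ⊆ U ∪ ⋃ i ∈ Iᶜ, eval i ⁻¹' Ici ε := by
    intro p hp
    by_cases hlt : ∀ i ∉ I, p i < ε
    · refine Or.inl (hU (fun i ↦ ?_) hp)
      by_cases hi : i ∈ I
      · simp [hi]
      · simpa [hi] using (hlt i hi).le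
    · push Not at hlt
      obtain ⟨i, hi, hεi⟩ := hlt
      exact Or.inr (mem_biUnion (Finset.mem_compl.2 hi) hεi)
  calc _ ≤ Measure.pi κ (U ∪ ⋃ i ∈ Iᶜ, eval i ⁻¹' Ici ε) := measure_mono hsub
    _ ≤ Measure.pi κ U + ∑ i ∈ Iᶜ, Measure.pi κ (eval i ⁻¹' Ici ε) :=
      (measure_union_le _ _).trans (by gcongr; exact measure_biUnion_finset_le _ _)
    _ = Measure.pi κ U + ∑ i ∈ Iᶜ, κ i (Ici ε) := by
      simp_rw [(measurePreserving_eval κ _).measure_preimage measurableSet_Ici.nullMeasurableSet]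

theorem tendsto_measure_pi_of_tendsto_Iio {U : Set (ι → ℝ)} (hU : IsLowerSet U)
    (hUm : MeasurableSet U) (hrc : ∀ p i, update p i 0 ∈ U → ∃ ε > 0, update p i ε ∈ U)
    (I : Finset ι) {m : ι → Measure ℝ} [∀ i, IsProbabilityMeasure (m i)]
    {ν : ℕ → ι → Measure ℝ} [∀ j i, IsProbabilityMeasure (ν j i)]
    (hnn : ∀ j i, ∀ᵐ x ∂ν j i, 0 ≤ x) (hnull : ∀ j, ∀ i ∈ I, ν j i = m i)
    (hext : ∀ i ∉ I, ∀ ε > 0, Tendsto (fun j ↦ ν j i (Iio ε)) atTop (𝓝 1)) :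
    Tendsto (fun j ↦ Measure.pi (ν j) U) atTop
      (𝓝 (Measure.pi m ((I.piecewise · fun _ ↦ 0) ⁻¹' U))) := by
  set E : ℝ → Set (ι → ℝ) := fun ε ↦ (I.piecewise · fun _ ↦ ε) ⁻¹' U
  set ε : ℕ → ℝ := fun n ↦ 1 / (n + 1 : ℝ)
  have hε : ∀ n, 0 < ε n := fun n ↦ by positivity
  have hEn : Tendsto (fun n ↦ Measure.pi m (E (ε n))) atTop (𝓝 (Measure.pi m (E 0))) := by
    rw [show E 0 = ⋃ n, E (ε n) from (hU.iUnion_piecewise_preimage_eq hrc I).symm]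
    refine tendsto_measure_iUnion_atTop fun n n' hnn' ↦ hU.piecewise_preimage_antitone I ?_
    exact one_div_le_one_div_of_le (by positivity) (by gcongr)
  have htail : ∀ n, Tendsto (fun j ↦ ∑ i ∈ Iᶜ, ν j i (Ici (ε n))) atTop (𝓝 0) := by
    intro n
    rw [← Finset.sum_const_zero (s := Iᶜ)]
    refine tendsto_finsetSum _ fun i hi ↦ ?_
    simp_rw [← compl_Iio, prob_compl_eq_one_sub measurableSet_Iio]
    simpa using ENNReal.Tendsto.sub tendsto_const_nhds
      (hext i (Finset.mem_compl.1 hi) (ε n) (hε n)) (Or.inl ENNReal.one_ne_top)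
  refine tendsto_of_le_of_tendsto_lower_bounds
    (fun n j ↦ Measure.pi m (E (ε n)) - ∑ i ∈ Iᶜ, ν j i (Ici (ε n))) hEn (fun n ↦ ?_)
    (fun n j ↦ ?_) (fun j ↦ ?_)
  · simpa using ENNReal.Tendsto.sub tendsto_const_nhds (htail n) (Or.inr ENNReal.zero_ne_top)
  · rw [tsub_le_iff_right, ← measure_piecewise_preimage_congr (hnull j) _ hUm]
    exact measure_piecewise_preimage_le hU I (ε n)
  · exact measure_pi_le_measure_piecewise_preimage_zero (hnn j) hU hUm (hnull j)

end Measure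

section Policy

variable {ι : Type*} {D : (ι → ℝ) → ι → ℝ}

theorem isLowerSet_setOf_exists_eq_one (hD01 : ∀ p k, D p k = 0 ∨ D p k = 1)
    (hmono : ∀ p q : ι → ℝ, (∀ i, p i ≤ q i) → ∀ k, D q k ≤ D p k) (I : Finset ι) :
    IsLowerSet {p | ∃ k ∈ I, D p k = 1} := by
  rintro q p hpq ⟨k, hk, hq⟩
  refine ⟨k, hk, (hD01 p k).resolve_left fun h0 ↦ ?_⟩
  linarith [hmono p q hpq k]

theorem exists_pos_update_mem_setOf_exists_eq_one [DecidableEq ι]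
    (hD01 : ∀ p k, D p k = 0 ∨ D p k = 1)
    (hrc : ∀ (p : ι → ℝ) (i k : ι), Tendsto (fun ε : ℝ ↦ D (update p i ε) k)
      (𝓝[>] 0) (𝓝 (D (update p i 0) k))) (I : Finset ι) (p : ι → ℝ) (i : ι)
    (h : update p i 0 ∈ {p | ∃ k ∈ I, D p k = 1}) :
    ∃ ε > 0, update p i ε ∈ {p | ∃ k ∈ I, D p k = 1} := by
  obtain ⟨k, hk, h1⟩ := h
  have hev : ∀ᶠ ε in 𝓝[>] 0, D (update p i ε) k ≠ 0 ∧ 0 < ε :=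
    ((hrc p i k).eventually_ne (by rw [h1]; exact one_ne_zero)).and self_mem_nhdsWithin
  obtain ⟨ε, hne, hε⟩ := hev.exists
  exact ⟨ε, hε, k, hk, (hD01 _ k).resolve_left hne⟩

theorem Finset.sup'_eq_ite_of_eq_zero_or_one {s : Finset ι} (hs : s.Nonempty) {f : ι → ℝ}
    (hf : ∀ k, f k = 0 ∨ f k = 1) : s.sup' hs f = if ∃ k ∈ s, f k = 1 then 1 else 0 := by
  split_ifs with h
  · obtain ⟨k, hk, h1⟩ := h
    exact le_antisymm (Finset.sup'_le _ _ fun j _ ↦ (hf j).elim (·.le.trans zero_le_one) (·.le))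
      (h1 ▸ Finset.le_sup' f hk)
  · push Not at h
    have h0 : ∀ k ∈ s, f k = 0 := fun k hk ↦ (hf k).resolve_right (h k hk)
    rw [Finset.sup'_congr hs rfl h0, Finset.sup'_const]

theorem integral_sup'_piecewise_eq_measureReal [Fintype ι] [DecidableEq ι]
    {μ : Measure (ι → ℝ)} (hD01 : ∀ p k, D p k = 0 ∨ D p k = 1)
    (hDmeas : ∀ k, Measurable fun p ↦ D p k) {I : Finset ι} (hI : I.Nonempty) :
    ∫ p, I.sup' hI (fun k ↦ D (fun i ↦ if i ∈ I then p i else 0) k) ∂μ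
      = μ.real ((I.piecewise · fun _ ↦ 0) ⁻¹' {p | ∃ k ∈ I, D p k = 1}) := by
  change ∫ p, I.sup' hI (fun k ↦ D (I.piecewise p fun _ ↦ 0) k) ∂μ = _
  have hpw : Measurable (I.piecewise · fun _ ↦ (0 : ℝ)) := measurable_pi_lambda _ fun i ↦ by
    by_cases hi : i ∈ I <;> simp [Finset.piecewise, hi, measurable_pi_apply]
  rw [← integral_indicator_one (hpw (by measurability))]
  congr with p
  simp [Finset.sup'_eq_ite_of_eq_zero_or_one hI fun k ↦ hD01 _ k, Set.indicator_apply]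

end Policy

/-- For a monotone, right-continuous-at-zero policy `D` and null set `I`
(null p-values Uniform(0,1), independent), if the non-null p-values are driven to 0
along a sequence of alternatives, the probability of a false rejection converges to
`∫_{[0,1]^K} max_{k∈I} D_k(p_I^0) dp`; and the supremum of the FWER over all
alternative configurations equals this integral. -/
theorem stmt12 (K : ℕ)
    (D : (Fin K → ℝ) → Fin K → ℝ)
    (hD01 : ∀ p k, D p k = 0 ∨ D p k = 1)
    (hDmeas : ∀ k, Measurable fun p => D p k)
    (hmono : ∀ p q : Fin K → ℝ, (∀ i, p i ≤ q i) → ∀ k, D q k ≤ D p k)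
    (hrc : ∀ (p : Fin K → ℝ) (i k : Fin K),
      Filter.Tendsto (fun ε : ℝ => D (Function.update p i ε) k)
        (nhdsWithin 0 (Set.Ioi 0)) (nhds (D (Function.update p i 0) k)))
    (I : Finset (Fin K)) (hI : I.Nonempty)
    (ν : ℕ → Fin K → Measure ℝ)
    (hprob : ∀ j k, IsProbabilityMeasure (ν j k))
    (hsupp : ∀ j k, ν j k (Set.Icc (0:ℝ) 1)ᶜ = 0)
    (hnull : ∀ j, ∀ k ∈ I, ν j k = volume.restrict (Set.Icc 0 1))
    (hextreme : ∀ k ∉ I, ∀ ε : ℝ, 0 < ε →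
      Filter.Tendsto (fun j => ν j k (Set.Iio ε)) Filter.atTop (nhds 1)) :
    Filter.Tendsto
        (fun j => (Measure.pi (ν j) {p | ∃ k ∈ I, D p k = 1}).toReal) Filter.atTop
        (nhds (∫ p, (I.sup' hI fun k => D (fun i => if i ∈ I then p i else 0) k)
          ∂(Measure.pi fun _ : Fin K => volume.restrict (Set.Icc (0:ℝ) 1))))
    ∧ sSup {r : ℝ | ∃ κ : Fin K → Measure ℝ, (∀ k, IsProbabilityMeasure (κ k)) ∧
          (∀ k, κ k (Set.Icc (0:ℝ) 1)ᶜ = 0) ∧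
          (∀ k ∈ I, κ k = volume.restrict (Set.Icc 0 1)) ∧
          r = (Measure.pi κ {p | ∃ k ∈ I, D p k = 1}).toReal}
        = ∫ p, (I.sup' hI fun k => D (fun i => if i ∈ I then p i else 0) k)
            ∂(Measure.pi fun _ : Fin K => volume.restrict (Set.Icc (0:ℝ) 1)) := by
  have : IsProbabilityMeasure (volume.restrict (Icc (0 : ℝ) 1)) := ⟨by simp⟩
  have hU := isLowerSet_setOf_exists_eq_one hD01 hmono I
  have hUm : MeasurableSet {p | ∃ k ∈ I, D p k = 1} := by measurability
  have hrcU := exists_pos_update_mem_setOf_exists_eq_one hD01 hrc I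
  have hnn (κ : Fin K → Measure ℝ) (h : ∀ k, κ k (Icc 0 1)ᶜ = 0) (k : Fin K) :
      ∀ᵐ x ∂κ k, 0 ≤ x := Filter.mem_of_superset (mem_ae_iff.2 (h k)) fun _ hx ↦ hx.1
  rw [integral_sup'_piecewise_eq_measureReal hD01 hDmeas hI]
  refine ⟨(ENNReal.tendsto_toReal (measure_ne_top _ _)).comp
    (tendsto_measure_pi_of_tendsto_Iio hU hUm hrcU I (fun j ↦ hnn _ (hsupp j)) hnull hextreme),
    IsGreatest.csSup_eq ⟨?_, ?_⟩⟩
  · let κ₀ : Fin K → Measure ℝ := fun k ↦ if k ∈ I then volume.restrict (Icc 0 1) else .dirac 0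
    have hκ₀ : ∀ k, IsProbabilityMeasure (κ₀ k) := fun k ↦ by
      by_cases hk : k ∈ I <;> simp only [κ₀, hk, if_true, if_false] <;> infer_instance
    have hsupp₀ : ∀ k, κ₀ k (Icc 0 1)ᶜ = 0 := fun k ↦ by
      by_cases hk : k ∈ I <;> simp [κ₀, hk, Measure.restrict_apply measurableSet_Icc.compl]
    have hnull₀ : ∀ k ∈ I, κ₀ k = volume.restrict (Icc 0 1) := fun k hk ↦ if_pos hk
    refine ⟨κ₀, hκ₀, hsupp₀, hnull₀, congrArg ENNReal.toReal (tendsto_const_nhds_iff (l := (atTop : Filter ℕ)).1 ?_).symm⟩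
    exact tendsto_measure_pi_of_tendsto_Iio (ν := fun _ ↦ κ₀) hU hUm hrcU I
      (fun _ ↦ hnn κ₀ hsupp₀) (fun _ ↦ hnull₀) fun k hk ε hε ↦ by simp [κ₀, hk, hε]
  · rintro r ⟨κ, hκ, hsuppκ, hnullκ, rfl⟩
    exact ENNReal.toReal_mono (measure_ne_top _ _)
      (measure_pi_le_measure_piecewise_preimage_zero (hnn κ hsuppκ) hU hUm hnullκ)
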